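/- arXiv:2603.06592 — 3 statements merged into one kernel-verified Lean document; each statement's English description precedes it below -/
import Mathlib

section
/- Let Z and X be random variables taking values in standard Borel spaces, and let T(x) := P(Z ∈ · | X = x) be the regular conditional distribution of Z given X, viewed as a measurable map from the values of X to the space of probability measures on Z. Then T(X) is a sufficient statistic for Z: the conditional distribution of Z given both X and T(X) equals the conditional distribution of Z given T(X) alone, i.e., P(Z ∈ A | X, T(X)) = P(Z ∈ A | T(X)) almost surely for every measurable set A. -/
/-!
Since `T` is measurable, the pair `(X, T X)` generates the same σ-algebra as `X`, so the left
side is `μ⟦Z ⁻¹' A | σ(X)⟧`, which is a.e. `ω ↦ T (X ω) A`. That version is already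
`σ(T X)`-measurable, so by the tower property conditioning further on `σ(T X) ≤ σ(X)` leaves it
unchanged.
-/

open MeasureTheory ProbabilityTheory

lemma MeasurableSpace.comap_prodMk_comp_eq_comap {α β γ : Type*} [MeasurableSpace β]
    [MeasurableSpace γ] {g : β → γ} (hg : Measurable g) (X : α → β) :
    MeasurableSpace.comap (fun ω => (X ω, g (X ω))) inferInstance
      = MeasurableSpace.comap X inferInstance := by
  exact (MeasurableSpace.comap_prodMk X (g ∘ X)).trans <| sup_eq_left.2 (MeasurableSpace.comap_le_comap_of_eq_comp g hg rfl)

namespace MeasureTheory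

lemma condExp_ae_eq_condExp_of_aestronglyMeasurable {α E : Type*} [NormedAddCommGroup E]
    [NormedSpace ℝ E] [CompleteSpace E] {m₁ m₂ m₀ : MeasurableSpace α} {μ : Measure[m₀] α}
    {f : α → E} (hm₁₂ : m₁ ≤ m₂) (hm₂ : m₂ ≤ m₀) [SigmaFinite (μ.trim hm₂)]
    [SigmaFinite (μ.trim (hm₁₂.trans hm₂))] (h : AEStronglyMeasurable[m₁] (μ[f | m₂]) μ) :
    μ[f | m₁] =ᵐ[μ] μ[f | m₂] :=
  (condExp_condExp_of_le hm₁₂ hm₂).symm.trans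
    (condExp_of_aestronglyMeasurable' (hm₁₂.trans hm₂) h integrable_condExp)

end MeasureTheory

theorem posterior_is_sufficient_general
    {Ω 𝒳 𝒵 : Type*} [MeasurableSpace Ω]
    [MeasurableSpace 𝒳]
    [MeasurableSpace 𝒵] [StandardBorelSpace 𝒵] [Nonempty 𝒵]
    (μ : Measure Ω) [IsProbabilityMeasure μ]
    (X : Ω → 𝒳) (Z : Ω → 𝒵) (hX : Measurable X) (hZ : Measurable Z)
    (T : 𝒳 → Measure 𝒵) (hT : ∀ x, T x = condDistrib Z X μ x)
    (A : Set 𝒵) (hA : MeasurableSet A) :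
    μ⟦Z ⁻¹' A | MeasurableSpace.comap (fun ω => (X ω, T (X ω))) inferInstance⟧
      =ᵐ[μ] μ⟦Z ⁻¹' A | MeasurableSpace.comap (fun ω => T (X ω)) inferInstance⟧ := by
  have hTmeas : Measurable T := funext hT ▸ (condDistrib Z X μ).measurable
  have hposterior : (fun ω => (T (X ω)).real A)
      =ᵐ[μ] μ⟦Z ⁻¹' A | MeasurableSpace.comap X inferInstance⟧ := by
    simpa only [hT] using condDistrib_ae_eq_condExp hX hZ hA
  have hposterior_meas :
      Measurable[MeasurableSpace.comap (fun ω => T (X ω)) inferInstance]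
        (fun ω => (T (X ω)).real A) :=
    (Measure.measurable_coe hA).ennreal_toReal.comp (comap_measurable _)
  rw [MeasurableSpace.comap_prodMk_comp_eq_comap hTmeas X]
  exact (condExp_ae_eq_condExp_of_aestronglyMeasurable
    (MeasurableSpace.comap_le_comap_of_eq_comp T hTmeas rfl) hX.comap_le
    (hposterior_meas.aestronglyMeasurable.congr hposterior)).symm

/-- **Sufficiency of the posterior map.**
Let `Z` and `X` be random variables taking values in standard Borel spaces, and let
`T x := P(Z ∈ · | X = x)` be the regular conditional distribution of `Z` given `X`
(realized in Mathlib as `condDistrib Z X μ`), viewed as a measurable map into the space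
of (probability) measures on the target of `Z`. Then `T(X)` is a sufficient statistic for
`Z`: for every measurable set `A`, the conditional probability of `{Z ∈ A}` given the
σ-algebra generated by `(X, T(X))` coincides (a.s.) with the one given `T(X)` alone. -/
theorem posterior_is_sufficient
    {Ω 𝒳 𝒵 : Type*} [MeasurableSpace Ω]
    [MeasurableSpace 𝒳] [StandardBorelSpace 𝒳]
    [MeasurableSpace 𝒵] [StandardBorelSpace 𝒵] [Nonempty 𝒵]
    (μ : Measure Ω) [IsProbabilityMeasure μ]
    (X : Ω → 𝒳) (Z : Ω → 𝒵) (hX : Measurable X) (hZ : Measurable Z)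
    (T : 𝒳 → Measure 𝒵) (hT : ∀ x, T x = condDistrib Z X μ x)
    (A : Set 𝒵) (hA : MeasurableSet A) :
    μ⟦Z ⁻¹' A | MeasurableSpace.comap (fun ω => (X ω, T (X ω))) inferInstance⟧
      =ᵐ[μ] μ⟦Z ⁻¹' A | MeasurableSpace.comap (fun ω => T (X ω)) inferInstance⟧ :=
  posterior_is_sufficient_general μ X Z hX hZ T hT A hA
end

section
/- If T(x) := P(Z ∈ · | X = x) is the regular conditional distribution of Z given X, then I(Z; T(X)) = I(Z; X), i.e., the posterior map achieves equality in the data processing inequality. -/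
open MeasureTheory ProbabilityTheory
open scoped Classical

/-- Kullback–Leibler divergence `D(μ ‖ ν)`, valued in `EReal` (equal to `⊤` when `μ` is not
absolutely continuous w.r.t. `ν` or when the log-likelihood ratio is not integrable). -/

noncomputable def klDiv {α : Type*} [MeasurableSpace α] (μ ν : Measure α) : EReal :=
  if μ ≪ ν ∧ Integrable (fun x => Real.log ((μ.rnDeriv ν x).toReal)) μ then
    ((∫ x, Real.log ((μ.rnDeriv ν x).toReal) ∂μ : ℝ) : EReal)
  else ⊤

/-- Mutual information `I(A; B)`: the KL divergence of the joint law of `(A, B)`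
from the product of its marginals. -/
noncomputable def mutualInfo {Ω α β : Type*} [MeasurableSpace Ω] [MeasurableSpace α]
    [MeasurableSpace β] (μ : Measure Ω) (A : Ω → α) (B : Ω → β) : EReal :=
  klDiv (μ.map (fun ω => (A ω, B ω))) ((μ.map A).prod (μ.map B))

/-! Write `κ := condDistrib Z X μ`, so that the law of `(X, Z)` is `P_X ⊗ κ`. Since `κ x = T x`,
`κ` is the evaluation kernel `m ↦ m` on measures precomposed with `T`, and pushing forward along
`T × id` shows that the law of `(T X, Z)` is `P_{T X} ⊗ eval`. Both mutual informations are thus KL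
divergences against the constant kernel `P_Z`, and the density of `P_X ⊗ κ` with respect to
`P_X ⊗ P_Z` is `(x, z) ↦ (d(T x)/dP_Z)(z)`, a function of `(T x, z)`. A KL divergence is unchanged
by a map through which the density factors; absolute continuity, being the fibrewise condition
`T x ≪ P_Z`, is preserved too. -/

open scoped ENNReal

section

variable {α β γ : Type*} [MeasurableSpace α] [MeasurableSpace β] [MeasurableSpace γ]

lemma klDiv_eq_coe_klDiv {μ ν : Measure α} [IsFiniteMeasure μ] [IsFiniteMeasure ν]
    (h : μ Set.univ = ν Set.univ) :
    klDiv μ ν = InformationTheory.klDiv μ ν := by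
  by_cases hμν : μ ≪ ν ∧ Integrable (llr μ ν) μ
  · rw [klDiv, ← llr_def, if_pos hμν,
      ← EReal.coe_ennreal_toReal (InformationTheory.klDiv_ne_top hμν.1 hμν.2),
      InformationTheory.toReal_klDiv_of_measure_eq hμν.1 h]
  · rw [klDiv, ← llr_def, if_neg hμν,
      InformationTheory.klDiv_eq_top_iff.mpr fun hac hint => hμν ⟨hac, hint⟩]
    rfl

lemma map_withDensity_comp (ν : Measure α) {f : α → β} (hf : Measurable f) {g : β → ℝ≥0∞}
    (hg : Measurable g) :
    (ν.withDensity (g ∘ f)).map f = (ν.map f).withDensity g := by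
  ext s hs
  rw [Measure.map_apply hf hs, withDensity_apply _ (hf hs), withDensity_apply _ hs,
    setLIntegral_map hs hg hf]
  rfl

lemma klDiv_map_of_eq_withDensity_comp {μ ν : Measure α} [IsFiniteMeasure μ] [IsFiniteMeasure ν]
    {f : α → β} {g : β → ℝ≥0∞} (hf : Measurable f) (hg : Measurable g)
    (h : μ = ν.withDensity (g ∘ f)) :
    InformationTheory.klDiv (μ.map f) (ν.map f) = InformationTheory.klDiv μ ν := by
  have hμν : μ ≪ ν := h ▸ withDensity_absolutelyContinuous ν _
  have hrn : (μ.map f).rnDeriv (ν.map f) ∘ f =ᵐ[ν] μ.rnDeriv ν := by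
    have hμ : μ.map f = (ν.map f).withDensity g := h ▸ map_withDensity_comp ν hf hg
    have h' : (μ.map f).rnDeriv (ν.map f) =ᵐ[ν.map f] g := hμ ▸ Measure.rnDeriv_withDensity _ hg
    exact Filter.EventuallyEq.trans (ae_of_ae_map hf.aemeasurable h')
      (h ▸ Measure.rnDeriv_withDensity ν (hg.comp hf)).symm
  rw [InformationTheory.klDiv_eq_lintegral_klFun_of_ac hμν,
    InformationTheory.klDiv_eq_lintegral_klFun_of_ac (hμν.map hf), lintegral_map (by fun_prop) hf]
  exact lintegral_congr_ae (hrn.mono fun x hx => by simp only [← hx, Function.comp_apply])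

lemma klDiv_map_measurableEquiv (μ ν : Measure α) [IsFiniteMeasure μ] [IsFiniteMeasure ν]
    (e : α ≃ᵐ β) :
    InformationTheory.klDiv (μ.map e) (ν.map e) = InformationTheory.klDiv μ ν := by
  refine le_antisymm (InformationTheory.klDiv_map_le μ ν e.measurable) ?_
  simpa [Measure.map_map e.symm.measurable e.measurable] using
    InformationTheory.klDiv_map_le (μ.map e) (ν.map e) e.symm.measurable

lemma map_prodMap_compProd_comap (μ : Measure α) [SFinite μ] {f : α → β} (hf : Measurable f)
    (κ : Kernel β γ) [IsSFiniteKernel κ] :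
    (μ ⊗ₘ κ.comap f hf).map (Prod.map f id) = μ.map f ⊗ₘ κ := by
  ext s hs
  rw [Measure.map_apply (hf.prodMap measurable_id) hs, Measure.compProd_apply hs,
    Measure.compProd_apply ((hf.prodMap measurable_id) hs),
    lintegral_map (Kernel.measurable_kernel_prodMk_left hs) hf]
  rfl

variable [MeasurableSpace.CountablyGenerated γ]

lemma compProd_comap_eq_withDensity (μ : Measure α) [SFinite μ] {f : α → β} (hf : Measurable f)
    {κ η : Kernel β γ} [IsFiniteKernel κ] [IsFiniteKernel η] (hκη : ∀ᵐ a ∂μ, κ (f a) ≪ η (f a)) :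
    μ ⊗ₘ κ.comap f hf =
      (μ ⊗ₘ η.comap f hf).withDensity (fun p => κ.rnDeriv η (f p.1) p.2) := by
  have hg : Measurable fun p : α × γ => κ.rnDeriv η (f p.1) p.2 :=
    (Kernel.measurable_rnDeriv κ η).comp (hf.prodMap measurable_id)
  ext s hs
  rw [Measure.compProd_apply hs, withDensity_apply _ hs, ← lintegral_indicator hs,
    Measure.lintegral_compProd (hg.indicator hs)]
  refine lintegral_congr_ae ?_
  filter_upwards [hκη] with a ha
  rw [Kernel.comap_apply, Kernel.comap_apply,
    ← Kernel.setLIntegral_rnDeriv ha (measurable_prodMk_left hs),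
    ← lintegral_indicator (measurable_prodMk_left hs)]
  rfl

lemma klDiv_compProd_comap (μ : Measure α) [IsFiniteMeasure μ] {f : α → β} (hf : Measurable f)
    (κ η : Kernel β γ) [IsFiniteKernel κ] [IsFiniteKernel η] :
    InformationTheory.klDiv (μ ⊗ₘ κ.comap f hf) (μ ⊗ₘ η.comap f hf) =
      InformationTheory.klDiv (μ.map f ⊗ₘ κ) (μ.map f ⊗ₘ η) := by
  by_cases hκη : ∀ᵐ a ∂μ, κ (f a) ≪ η (f a)
  · rw [← map_prodMap_compProd_comap μ hf κ, ← map_prodMap_compProd_comap μ hf η]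
    exact (klDiv_map_of_eq_withDensity_comp (hf.prodMap measurable_id)
      (Kernel.measurable_rnDeriv κ η) (compProd_comap_eq_withDensity μ hf hκη)).symm
  · rw [InformationTheory.klDiv_of_not_ac, InformationTheory.klDiv_of_not_ac]
    · rwa [Measure.absolutelyContinuous_compProd_right_iff,
        ae_map_iff hf.aemeasurable (Kernel.measurableSet_absolutelyContinuous κ η)]
    · rwa [Measure.absolutelyContinuous_compProd_right_iff]

end

lemma mutualInfo_eq_klDiv_compProd {Ω α β : Type*} [MeasurableSpace Ω] [MeasurableSpace α]
    [MeasurableSpace β] (μ : Measure Ω) [IsProbabilityMeasure μ] {A : Ω → α} {B : Ω → β}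
    (hA : Measurable A) (hB : Measurable B) {κ : Kernel β α}
    (hκ : μ.map B ⊗ₘ κ = μ.map (fun ω => (B ω, A ω))) :
    mutualInfo μ A B =
      InformationTheory.klDiv (μ.map B ⊗ₘ κ) (μ.map B ⊗ₘ Kernel.const β (μ.map A)) := by
  have := Measure.isProbabilityMeasure_map (μ := μ) hA.aemeasurable
  have := Measure.isProbabilityMeasure_map (μ := μ) hB.aemeasurable
  have := Measure.isProbabilityMeasure_map (μ := μ) (hA.prodMk hB).aemeasurable
  have := Measure.isProbabilityMeasure_map (μ := μ) (hB.prodMk hA).aemeasurable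
  rw [hκ, Measure.compProd_const, mutualInfo, klDiv_eq_coe_klDiv (by simp),
    ← klDiv_map_measurableEquiv _ _ MeasurableEquiv.prodComm]
  congr 2
  · rw [Measure.map_map (MeasurableEquiv.measurable _) (hA.prodMk hB)]
    rfl
  · exact Measure.prod_swap

section EvalKernel

variable {𝒵 : Type*} [MeasurableSpace 𝒵]

/-- `m ↦ m`, set to `0` on measures of mass `> 1` so as to be a finite kernel. -/
noncomputable def evalKernel : Kernel (Measure 𝒵) 𝒵 where
  toFun := Set.piecewise {m : Measure 𝒵 | m Set.univ ≤ 1} id 0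
  measurable' := Measurable.piecewise
    (measurableSet_le (Measure.measurable_coe MeasurableSet.univ) measurable_const)
    measurable_id measurable_const

lemma evalKernel_apply (m : Measure 𝒵) [IsProbabilityMeasure m] : evalKernel m = m := by
  simp [evalKernel]

instance : IsFiniteKernel (evalKernel (𝒵 := 𝒵)) := by
  refine ⟨⟨1, ENNReal.one_lt_top, fun m => ?_⟩⟩
  by_cases h : m Set.univ ≤ 1 <;> simp [evalKernel, h]

end EvalKernel

theorem mutualInfo_posterior_eq_general
    {Ω 𝒳 𝒵 : Type*} [MeasurableSpace Ω]
    [MeasurableSpace 𝒳]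
    [MeasurableSpace 𝒵] [StandardBorelSpace 𝒵] [Nonempty 𝒵]
    (μ : Measure Ω) [IsProbabilityMeasure μ]
    (X : Ω → 𝒳) (Z : Ω → 𝒵) (hX : Measurable X) (hZ : Measurable Z)
    (T : 𝒳 → Measure 𝒵) (hT : ∀ x, T x = condDistrib Z X μ x) :
    mutualInfo μ Z (fun ω => T (X ω)) = mutualInfo μ Z X := by
  have hTm : Measurable T := (funext hT : T = _) ▸ (condDistrib Z X μ).measurable
  have hcond : condDistrib Z X μ = evalKernel.comap T hTm := by
    ext x : 1
    rw [Kernel.comap_apply, hT x, evalKernel_apply]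
  have hjoint : μ.map X ⊗ₘ evalKernel.comap T hTm = μ.map (fun ω => (X ω, Z ω)) :=
    hcond ▸ compProd_map_condDistrib hZ.aemeasurable
  have hconst : (Kernel.const (Measure 𝒵) (μ.map Z)).comap T hTm = Kernel.const 𝒳 (μ.map Z) :=
    rfl
  have hTX : μ.map (fun ω => T (X ω)) = (μ.map X).map T := (Measure.map_map hTm hX).symm
  have hjointT : μ.map (fun ω => T (X ω)) ⊗ₘ evalKernel = μ.map (fun ω => (T (X ω), Z ω)) := by
    rw [hTX, ← map_prodMap_compProd_comap _ hTm, hjoint,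
      Measure.map_map (hTm.prodMap measurable_id) (hX.prodMk hZ)]
    rfl
  rw [mutualInfo_eq_klDiv_compProd μ (B := fun ω => T (X ω)) hZ (hTm.comp hX) hjointT,
    mutualInfo_eq_klDiv_compProd μ hZ hX hjoint, hTX, ← hconst, klDiv_compProd_comap]

/-- **The posterior map achieves equality in the data processing inequality.**
If `T x := P(Z ∈ · | X = x)` is the regular conditional distribution of `Z` given `X`
(Mathlib's `condDistrib Z X μ`), viewed as a map into the space of measures on the
target of `Z`, then `I(Z; T(X)) = I(Z; X)`. -/
theorem mutualInfo_posterior_eq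
    {Ω 𝒳 𝒵 : Type*} [MeasurableSpace Ω]
    [MeasurableSpace 𝒳] [StandardBorelSpace 𝒳]
    [MeasurableSpace 𝒵] [StandardBorelSpace 𝒵] [Nonempty 𝒵]
    (μ : Measure Ω) [IsProbabilityMeasure μ]
    (X : Ω → 𝒳) (Z : Ω → 𝒵) (hX : Measurable X) (hZ : Measurable Z)
    (T : 𝒳 → Measure 𝒵) (hT : ∀ x, T x = condDistrib Z X μ x) :
    mutualInfo μ Z (fun ω => T (X ω)) = mutualInfo μ Z X :=
  mutualInfo_posterior_eq_general μ X Z hX hZ T hT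
end

section
/- Consider the distance-2 tree metric: for leaves w_i, w_j of a finite rooted tree, let d_tree(w_i, w_j) be the number of edges on the path between them. Then d_tree is a metric on the leaf set, and moreover √d_tree is also a metric (tree distances are of negative type), so any finite tree metric with the square-root transform embeds isometrically into Euclidean space. -/
/-!
Fix a root `r` and send each vertex `v` to the indicator vector, indexed by edges, of the path
from `r` to `v`. Deleting an edge `e` of a tree leaves exactly two sides, so `e` separates `u`
from `v` iff it separates exactly one of them from `r`: the path from `u` to `v` consists of the
edges in the symmetric difference of the two root paths. Hence `‖f u - f v‖²` counts the edges
between `u` and `v`, and `√d_tree` is the restriction of a Euclidean distance.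
-/

open Finset
open scoped symmDiff

theorem EuclideanSpace.sq_norm_sub_indicator {ι : Type*} [Fintype ι] [DecidableEq ι]
    (s t : Finset ι) :
    ‖(WithLp.toLp 2 ((s : Set ι).indicator 1) - WithLp.toLp 2 ((t : Set ι).indicator 1) :
      EuclideanSpace ℝ ι)‖ ^ 2 = #(s ∆ t) := by
  have hterm : ∀ i, ‖((s : Set ι).indicator (1 : ι → ℝ) i - (t : Set ι).indicator 1 i)‖ ^ 2 =
      if i ∈ s ∆ t then 1 else 0 := by
    intro i
    by_cases hs : i ∈ s <;> by_cases ht : i ∈ t <;> simp [hs, ht, mem_symmDiff]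
  rw [EuclideanSpace.norm_sq_eq]
  simp only [WithLp.ofLp_sub, Pi.sub_apply, hterm, sum_boole, filter_mem_eq_inter, univ_inter]

namespace SimpleGraph

variable {V : Type*} {G : SimpleGraph V}

theorem reachable_deleteEdges_or {x a : V} (b : V) (w : G.Walk x a) :
    (G.deleteEdges {s(a, b)}).Reachable x a ∨ (G.deleteEdges {s(a, b)}).Reachable x b := by
  induction w with
  | nil => exact .inl .rfl
  | @cons x m a hxm _ ih =>
    by_cases he : s(x, m) = s(a, b)
    · obtain ⟨rfl, -⟩ | ⟨rfl, -⟩ := Sym2.eq_iff.mp he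
      exacts [.inl .rfl, .inr .rfl]
    · have hxm' : (G.deleteEdges {s(a, b)}).Adj x m := by simpa [deleteEdges_adj, hxm] using he
      exact ih.imp hxm'.reachable.trans hxm'.reachable.trans

/-- Deleting `s(a, b)` from a connected graph leaves at most two components, those of `a` and
`b`. -/
theorem Preconnected.reachable_deleteEdges_iff (hG : G.Preconnected) (a b x y : V) :
    (G.deleteEdges {s(a, b)}).Reachable x y ↔
      ((G.deleteEdges {s(a, b)}).Reachable x a ↔ (G.deleteEdges {s(a, b)}).Reachable y a) := by
  refine ⟨fun h => ⟨h.symm.trans, h.trans⟩, fun h => ?_⟩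
  by_cases hx : (G.deleteEdges {s(a, b)}).Reachable x a
  · exact hx.trans (h.mp hx).symm
  · obtain ⟨wx⟩ := hG x a
    obtain ⟨wy⟩ := hG y a
    exact ((reachable_deleteEdges_or b wx).resolve_left hx).trans
      ((reachable_deleteEdges_or b wy).resolve_left (mt h.mpr hx)).symm

theorem IsAcyclic.mem_edges_iff_not_reachable_deleteEdges (hG : G.IsAcyclic) {u v : V}
    {p : G.Walk u v} (hp : p.IsPath) (e : Sym2 V) :
    e ∈ p.edges ↔ ¬ (G.deleteEdges {e}).Reachable u v := by
  classical
  obtain ⟨a, b⟩ := e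
  refine ⟨fun hep ⟨q⟩ => ?_, p.mem_edges_of_not_reachable_deleteEdges⟩
  obtain ⟨q, hq⟩ := reachable_deleteEdges_iff_exists_walk.mp ⟨q⟩
  have := hG.subsingleton_path u v
  have hbypass : q.bypass = p :=
    congrArg Subtype.val (Subsingleton.elim ⟨q.bypass, q.bypass_isPath⟩ ⟨p, hp⟩)
  exact hq (q.edges_bypass_subset_edges (hbypass ▸ hep))

theorem IsTree.edges_toFinset_eq_symmDiff [DecidableEq V] (hG : G.IsTree) {r u v : V}
    {p : G.Walk u v} {q : G.Walk r u} {q' : G.Walk r v}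
    (hp : p.IsPath) (hq : q.IsPath) (hq' : q'.IsPath) :
    p.edges.toFinset = q.edges.toFinset ∆ q'.edges.toFinset := by
  ext e
  obtain ⟨a, b⟩ := e
  have hR := hG.connected.preconnected.reachable_deleteEdges_iff a b
  simp only [List.mem_toFinset, mem_symmDiff,
    hG.isAcyclic.mem_edges_iff_not_reachable_deleteEdges hp,
    hG.isAcyclic.mem_edges_iff_not_reachable_deleteEdges hq,
    hG.isAcyclic.mem_edges_iff_not_reachable_deleteEdges hq', hR u v, hR r u, hR r v]
  tauto

theorem IsTree.exists_sq_norm_sub_eq_dist [Finite V] (hG : G.IsTree) :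
    ∃ (N : ℕ) (f : V → EuclideanSpace ℝ (Fin N)), ∀ u v, ‖f u - f v‖ ^ 2 = G.dist u v := by
  classical
  have := Fintype.ofFinite V
  obtain ⟨r⟩ := hG.connected.nonempty
  choose path hpath using fun v => hG.connected.exists_isPath r v
  let e := LinearIsometryEquiv.piLpCongrLeft 2 ℝ ℝ (Fintype.equivFin (Sym2 V))
  refine ⟨_, fun v => e (WithLp.toLp 2 (((path v).edges.toFinset : Set (Sym2 V)).indicator 1)),
    fun u v => ?_⟩
  obtain ⟨p, hp, hlen⟩ := hG.connected.exists_path_of_dist u v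
  rw [← map_sub, LinearIsometryEquiv.norm_map, EuclideanSpace.sq_norm_sub_indicator,
    ← hG.edges_toFinset_eq_symmDiff hp (hpath u) (hpath v),
    List.toFinset_card_of_nodup hp.edges_nodup, Walk.length_edges, hlen]

end SimpleGraph

theorem tree_metric_negative_type_general
    {V : Type*} [Fintype V]
    (G : SimpleGraph V) (hG : G.IsTree)
    (L : Set V) :
    (∀ u ∈ L, ∀ v ∈ L,
        (G.dist u v = 0 ↔ u = v) ∧ G.dist u v = G.dist v u
          ∧ ∀ w ∈ L, G.dist u w ≤ G.dist u v + G.dist v w)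
      ∧ (∀ u ∈ L, ∀ v ∈ L, ∀ w ∈ L,
          Real.sqrt (G.dist u w) ≤ Real.sqrt (G.dist u v) + Real.sqrt (G.dist v w))
      ∧ (∃ (N : ℕ) (f : V → EuclideanSpace ℝ (Fin N)),
          ∀ u ∈ L, ∀ v ∈ L, ‖f u - f v‖ ^ 2 = (G.dist u v : ℝ)) := by
  obtain ⟨N, f, hf⟩ := hG.exists_sq_norm_sub_eq_dist
  have hsqrt (u v : V) : Real.sqrt (G.dist u v) = ‖f u - f v‖ := by
    rw [← hf, Real.sqrt_sq (norm_nonneg _)]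
  refine ⟨fun u _ v _ => ⟨hG.connected.dist_eq_zero_iff, G.dist_comm,
      fun w _ => hG.connected.dist_triangle⟩, fun u _ v _ w _ => ?_, N, f, fun u _ v _ => hf u v⟩
  rw [hsqrt, hsqrt, hsqrt]
  exact norm_sub_le_norm_sub_add_norm_sub _ _ _

/-- **Tree metrics are of negative type and embed (after a square root) into Euclidean
space.**  Let `T` be a finite tree with leaf set `L`, and let `d_tree` be the number of
edges on the path between two leaves (the graph distance).  Then:
(a) `d_tree` is a metric on `L` (zero iff equal, symmetric, triangle inequality);
(b) `√d_tree` also satisfies the triangle inequality on `L`;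
(c) there is a map `f : L → ℝ^N` with `‖f(u) − f(v)‖² = d_tree(u, v)` for all leaves
`u, v`, i.e. the structural-probe objective is achievable in principle. -/
theorem tree_metric_negative_type
    {V : Type*} [Fintype V] [DecidableEq V]
    (G : SimpleGraph V) [DecidableRel G.Adj] (hG : G.IsTree)
    (L : Set V) (hL : L = {v | G.degree v = 1}) :
    (∀ u ∈ L, ∀ v ∈ L,
        (G.dist u v = 0 ↔ u = v) ∧ G.dist u v = G.dist v u
          ∧ ∀ w ∈ L, G.dist u w ≤ G.dist u v + G.dist v w)
      ∧ (∀ u ∈ L, ∀ v ∈ L, ∀ w ∈ L,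
          Real.sqrt (G.dist u w) ≤ Real.sqrt (G.dist u v) + Real.sqrt (G.dist v w))
      ∧ (∃ (N : ℕ) (f : V → EuclideanSpace ℝ (Fin N)),
          ∀ u ∈ L, ∀ v ∈ L, ‖f u - f v‖ ^ 2 = (G.dist u v : ℝ)) :=
  tree_metric_negative_type_general G hG L
end
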